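/- With μ_n(ψ) as defined for the arc transform with fixed half-length ψ ∈ [0, π], for even n = 2m one has lim_{m→∞} ((4m+1)/4) μ_{2m}(ψ)² = 4πψ for ψ ∈ [0, π/2] and = 12πψ - 4π² for ψ ∈ [π/2, π]. -/

import Mathlib

open Real Finset Filter

/-- The square `|P̃_n^j(0)|²` of the normalized associated Legendre function at zero,
for integer order `j` with `|j| ≤ n`. -/
noncomputable def ptildeSqZ (n : ℕ) (j : ℤ) : ℝ :=
  if Even ((n : ℤ) + j) then
    (2 * n + 1) / (4 * Real.pi) *
      ((Nat.doubleFactorial (n - j.natAbs - 1) * Nat.doubleFactorial (n + j.natAbs - 1) : ℝ) /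
        (Nat.doubleFactorial (n - j.natAbs) * Nat.doubleFactorial (n + j.natAbs) : ℝ))
  else 0

/-- The function `s_j(ψ)`: `2ψ` for `j = 0` and `2 sin(jψ)/j` otherwise. -/
noncomputable def sArc (j : ℤ) (ψ : ℝ) : ℝ :=
  if j = 0 then 2 * ψ else 2 * Real.sin (j * ψ) / j

/-- The squared singular values `μ_n(ψ)²` of the arc transform with fixed half-length `ψ`. -/
noncomputable def muSq (n : ℕ) (ψ : ℝ) : ℝ :=
  8 * Real.pi ^ 2 / (2 * n + 1) *
    ∑ j ∈ Finset.Icc (-(n : ℤ)) (n : ℤ), ptildeSqZ n j * sArc j ψ ^ 2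

/-!
Pairing the orders `j` and `-j` and dropping the odd ones (where `P̃_{2m}^j(0) = 0`) gives
`((4m+1)/4) μ_{2m}(ψ)² = 8 w_m(0) ψ² + 4 ∑_{l=1}^m w_m(l) sin²(2lψ)/l²` with
`w_m(l) = π² |P̃_{2m}^{2l}(0)|² = π(4m+1)/4 · r(m-l) r(m+l)`, `r(a) = (2a-1)!!/(2a)!!`.
Wallis' product says `r(a)² (2a+1) → 2/π`; hence `w_m(l) → 1` for each fixed `l`, and also
`w_m(l) ≤ √(20 l)` uniformly. As `∑ √l / l²` converges, Tannery's theorem lets us pass to the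
limit termwise, and the limiting series `∑ sin²(2lψ)/l²` is read off the Fourier series of the
Bernoulli polynomial `B₂`.
-/

open scoped Nat Topology

lemma sum_Icc_neg_natCast {M : Type*} [AddCommMonoid M] (f : ℤ → M) (n : ℕ) :
    ∑ j ∈ Icc (-(n : ℤ)) n, f j = f 0 + ∑ k ∈ Icc 1 n, (f k + f (-k)) := by
  induction n with
  | zero => simp
  | succ n ih =>
    have hIcc : Icc (-((n + 1 : ℕ) : ℤ)) (n + 1 : ℕ)
        = insert (-((n + 1 : ℕ) : ℤ)) (insert ((n + 1 : ℕ) : ℤ) (Icc (-(n : ℤ)) n)) := by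
      ext j
      simp only [mem_Icc, mem_insert]
      omega
    rw [hIcc, sum_insert (by simp only [mem_insert, mem_Icc]; omega),
      sum_insert (by simp only [mem_Icc]; omega), ih, sum_Icc_succ_top (by omega)]
    abel

lemma sum_Icc_two_mul_of_odd {M : Type*} [AddCommMonoid M] (g : ℕ → M)
    (hg : ∀ k, Odd k → g k = 0) (m : ℕ) :
    ∑ k ∈ Icc 1 (2 * m), g k = ∑ l ∈ Icc 1 m, g (2 * l) := by
  induction m with
  | zero => simp
  | succ m ih =>
    rw [show 2 * (m + 1) = 2 * m + 1 + 1 by ring, sum_Icc_succ_top (by omega),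
      sum_Icc_succ_top (by omega), ih, hg _ (odd_two_mul_add_one m), add_zero,
      sum_Icc_succ_top (by omega), mul_add_one]

lemma tendsto_sum_Icc_mul_of_dominated {c : ℕ → ℕ → ℝ} {a bound : ℕ → ℝ}
    (hsum : Summable bound) (hbound : ∀ l, 0 ≤ bound l) (ha : a 0 = 0)
    (hc : ∀ l, Tendsto (fun m ↦ c m l) atTop (𝓝 1))
    (hdom : ∀ m l, l ∈ Icc 1 m → ‖c m l * a l‖ ≤ bound l) :
    Tendsto (fun m ↦ ∑ l ∈ Icc 1 m, c m l * a l) atTop (𝓝 (∑' l, a l)) := by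
  have hind : ∀ m, ∑ l ∈ Icc 1 m, c m l * a l =
      ∑' l, (Icc 1 m : Set ℕ).indicator (fun l ↦ c m l * a l) l :=
    fun m ↦ sum_eq_tsum_indicator _ _
  simp_rw [hind]
  refine tendsto_tsum_of_dominated_convergence hsum (fun l ↦ ?_) (.of_forall fun m l ↦ ?_)
  · rcases l.eq_zero_or_pos with rfl | hl
    · simp [ha]
    · have : Tendsto (fun m ↦ c m l * a l) atTop (𝓝 (a l)) := by
        simpa using (hc l).mul_const (a l)
      refine this.congr' ?_
      filter_upwards [eventually_ge_atTop l] with m hm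
      rw [Set.indicator_of_mem (by simp; omega)]
  · by_cases hl : l ∈ Icc 1 m
    · rw [Set.indicator_of_mem (by simpa using hl)]
      exact hdom m l hl
    · rw [Set.indicator_of_notMem (by simpa using hl), norm_zero]
      exact hbound l

lemma summable_sqrt_div_sq : Summable (fun n : ℕ ↦ √(n : ℝ) / n ^ 2) := by
  refine (summable_nat_rpow.2 (by norm_num : (-3 / 2 : ℝ) < -1)).congr fun n ↦ ?_
  rcases n.eq_zero_or_pos with rfl | hn
  · simp
  · have hn : (0 : ℝ) < n := by exact_mod_cast hn
    rw [sqrt_eq_rpow, ← rpow_natCast, ← rpow_sub hn]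
    norm_num

lemma hasSum_sin_mul_sq_div_sq {θ : ℝ} (h0 : 0 ≤ θ) (h1 : θ ≤ π) :
    HasSum (fun k : ℕ ↦ sin (k * θ) ^ 2 / k ^ 2) ((π * θ - θ ^ 2) / 2) := by
  have hx : θ / π ∈ Set.Icc (0 : ℝ) 1 :=
    ⟨div_nonneg h0 pi_pos.le, (div_le_one pi_pos).2 h1⟩
  have hcos := hasSum_one_div_nat_pow_mul_cos one_ne_zero hx
  rw [← bernoulliFun] at hcos
  simp only [mul_one, bernoulliFun_two] at hcos
  have hterm : (fun k : ℕ ↦ sin (k * θ) ^ 2 / k ^ 2) =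
      fun k : ℕ ↦ (1 / (k : ℝ) ^ 2 - 1 / (k : ℝ) ^ 2 * cos (2 * π * k * (θ / π))) / 2 := by
    ext k
    rw [sin_sq_eq_half_sub, show 2 * π * k * (θ / π) = 2 * (k * θ) by field_simp]
    ring
  have hval : (π * θ - θ ^ 2) / 2 = (π ^ 2 / 6 -
      (-1) ^ (1 + 1) * (2 * π) ^ 2 / 2 / (2 ! : ℕ) * ((θ / π) ^ 2 - θ / π + 6⁻¹)) / 2 := by
    simp only [Nat.factorial_two]
    field_simp
    ring
  rw [hterm, hval]
  exact (hasSum_zeta_two.sub hcos).div_const 2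

lemma hasSum_sin_two_mul_sq_div_sq {ψ : ℝ} (hψ : ψ ∈ Set.Icc 0 π) :
    HasSum (fun k : ℕ ↦ sin (2 * k * ψ) ^ 2 / k ^ 2)
      (if ψ ≤ π / 2 then π * ψ - 2 * ψ ^ 2 else 3 * π * ψ - 2 * ψ ^ 2 - π ^ 2) := by
  obtain ⟨hψ0, hψπ⟩ := hψ
  split_ifs with h
  · convert hasSum_sin_mul_sq_div_sq (θ := 2 * ψ) (by linarith) (by linarith) using 1
    · ext k; ring_nf
    · ring
  · convert hasSum_sin_mul_sq_div_sq (θ := 2 * π - 2 * ψ) (by linarith) (by linarith) using 1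
    · ext k
      rw [show k * (2 * π - 2 * ψ) = -(2 * k * ψ) + k * (2 * π) by ring, sin_add_nat_mul_two_pi,
        sin_neg, neg_sq]
    · ring

lemma tendsto_sq_div_sq_sub (c : ℝ) :
    Tendsto (fun m : ℕ ↦ (4 * (m : ℝ) + 1) ^ 2 / ((2 * m + 1) ^ 2 - c)) atTop (𝓝 4) := by
  have hinv := tendsto_inv_atTop_nhds_zero_nat (𝕜 := ℝ)
  have h : Tendsto (fun m : ℕ ↦ (4 + (m : ℝ)⁻¹) ^ 2 / ((2 + (m : ℝ)⁻¹) ^ 2 - c * (m : ℝ)⁻¹ ^ 2))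
      atTop (𝓝 ((4 + 0) ^ 2 / ((2 + 0) ^ 2 - c * 0 ^ 2))) :=
    ((hinv.const_add 4).pow 2).div (((hinv.const_add 2).pow 2).sub ((hinv.pow 2).const_mul c))
      (by norm_num)
  rw [show ((4 : ℝ) + 0) ^ 2 / ((2 + 0) ^ 2 - c * 0 ^ 2) = 4 by norm_num] at h
  refine h.congr' ?_
  filter_upwards [eventually_ne_atTop 0] with m hm
  have hm' : (m : ℝ) ^ 2 ≠ 0 := pow_ne_zero 2 (Nat.cast_ne_zero.2 hm)
  rw [← mul_div_mul_right _ _ hm']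
  congr 1 <;> field_simp

noncomputable def wallisRatio (a : ℕ) : ℝ := ((2 * a - 1)‼ : ℝ) / (2 * a)‼

lemma wallisRatio_eq (a : ℕ) : wallisRatio a = (2 * a)! / (2 ^ a * a !) ^ 2 := by
  have hfact : (2 * a)! = (2 * a)‼ * (2 * a - 1)‼ := by
    rcases a with _ | a
    · rfl
    · rw [show 2 * (a + 1) = 2 * a + 1 + 1 by ring, Nat.factorial_eq_mul_doubleFactorial]
      rfl
  have hpos : (0 : ℝ) < (2 * a)‼ := by exact_mod_cast Nat.doubleFactorial_pos _
  have h2 : ((2 : ℝ) ^ a * a !) = (2 * a)‼ := by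
    exact_mod_cast (Nat.doubleFactorial_two_mul a).symm
  rw [wallisRatio, hfact, h2]
  push_cast
  field_simp

lemma wallisRatio_sq_mul (a : ℕ) : wallisRatio a ^ 2 * (2 * a + 1) = (Wallis.W a)⁻¹ := by
  have : (0 : ℝ) < a ! := by exact_mod_cast Nat.factorial_pos a
  rw [wallisRatio_eq, Wallis.W_eq_factorial_ratio]
  field_simp
  ring

lemma tendsto_wallisRatio_sq_mul :
    Tendsto (fun a ↦ wallisRatio a ^ 2 * (2 * a + 1)) atTop (𝓝 (2 / π)) := by
  simp_rw [wallisRatio_sq_mul, ← inv_div π 2]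
  exact Wallis.tendsto_W_nhds_pi_div_two.inv₀ (by positivity)

lemma wallisRatio_sq_mul_le (a : ℕ) : wallisRatio a ^ 2 * (2 * a + 1) ≤ 4 / π := by
  have hW : π / 4 ≤ Wallis.W a := by
    refine le_trans ?_ (Wallis.le_W a)
    rw [div_mul_div_comm, div_le_div_iff₀ (by norm_num) (by positivity)]
    nlinarith [pi_pos, (a.cast_nonneg : (0 : ℝ) ≤ a)]
  rw [wallisRatio_sq_mul, ← inv_div]
  exact inv_anti₀ (by positivity) hW

lemma sArc_neg (j : ℤ) (ψ : ℝ) : sArc (-j) ψ = sArc j ψ := by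
  unfold sArc
  rcases eq_or_ne j 0 with rfl | hj
  · simp
  · rw [if_neg (neg_ne_zero.2 hj), if_neg hj, Int.cast_neg, neg_mul, sin_neg, mul_neg,
      neg_div_neg_eq]

lemma ptildeSqZ_neg (n : ℕ) (j : ℤ) : ptildeSqZ n (-j) = ptildeSqZ n j := by
  simp only [ptildeSqZ, Int.natAbs_neg, ← sub_eq_add_neg, Int.even_sub, Int.even_add]

lemma ptildeSqZ_eq_zero_of_odd {n : ℕ} {j : ℤ} (h : Odd ((n : ℤ) + j)) : ptildeSqZ n j = 0 :=
  if_neg (Int.not_even_iff_odd.2 h)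

lemma ptildeSqZ_nonneg (n : ℕ) (j : ℤ) : 0 ≤ ptildeSqZ n j := by
  unfold ptildeSqZ
  split_ifs
  · have := pi_pos
    positivity
  · rfl

lemma ptildeSqZ_two_mul {m l : ℕ} (h : l ≤ m) :
    ptildeSqZ (2 * m) (2 * l : ℕ) =
      (4 * m + 1) / (4 * π) * (wallisRatio (m - l) * wallisRatio (m + l)) := by
  have heven : Even (((2 * m : ℕ) : ℤ) + (2 * l : ℕ)) := by
    rw [← Nat.cast_add, Int.even_coe_nat, ← mul_add]
    exact even_two_mul _
  rw [ptildeSqZ, if_pos heven, Int.natAbs_natCast, wallisRatio, wallisRatio, div_mul_div_comm,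
    show 2 * m - 2 * l = 2 * (m - l) by omega, show 2 * m + 2 * l = 2 * (m + l) by ring]
  push_cast
  ring

noncomputable def ptildeWeight (m l : ℕ) : ℝ := π ^ 2 * ptildeSqZ (2 * m) (2 * l : ℕ)

lemma ptildeWeight_nonneg (m l : ℕ) : 0 ≤ ptildeWeight m l :=
  mul_nonneg (sq_nonneg π) (ptildeSqZ_nonneg _ _)

lemma muSq_two_mul (m : ℕ) (ψ : ℝ) :
    (4 * (m : ℝ) + 1) / 4 * muSq (2 * m) ψ =
      ptildeWeight m 0 * (8 * ψ ^ 2) +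
        4 * ∑ l ∈ Icc 1 m, ptildeWeight m l * (sin (2 * l * ψ) ^ 2 / l ^ 2) := by
  have hodd : ∀ k : ℕ, Odd k → 2 * (ptildeSqZ (2 * m) k * sArc k ψ ^ 2) = 0 := fun k hk ↦ by
    have : Odd (((2 * m + k : ℕ) : ℤ)) := by exact_mod_cast (even_two_mul m).add_odd hk
    rw [ptildeSqZ_eq_zero_of_odd (by exact_mod_cast this), zero_mul, mul_zero]
  have hsArc : ∀ l ∈ Icc 1 m, sArc (2 * l : ℕ) ψ ^ 2 = sin (2 * l * ψ) ^ 2 / l ^ 2 :=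
      fun l hl ↦ by
    have : (l : ℝ) ≠ 0 := by exact_mod_cast Nat.one_le_iff_ne_zero.1 (mem_Icc.1 hl).1
    rw [sArc, if_neg (by have := (mem_Icc.1 hl).1; omega)]
    push_cast
    field_simp
  have hsym : ∀ k : ℕ,
      ptildeSqZ (2 * m) k * sArc k ψ ^ 2 + ptildeSqZ (2 * m) (-k) * sArc (-k) ψ ^ 2 =
        2 * (ptildeSqZ (2 * m) k * sArc k ψ ^ 2) := fun k ↦ by
    rw [ptildeSqZ_neg, sArc_neg]; ring
  rw [muSq, sum_Icc_neg_natCast, sum_congr rfl (fun k _ ↦ hsym k), sum_Icc_two_mul_of_odd _ hodd,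
    sum_congr rfl (fun l hl ↦ by rw [hsArc l hl]), sArc, if_pos rfl]
  have hconst :
      (4 * (m : ℝ) + 1) / 4 * (8 * π ^ 2 / (2 * ((2 * m : ℕ) : ℝ) + 1)) = 2 * π ^ 2 := by
    push_cast
    field_simp
    ring
  rw [← mul_assoc, hconst, mul_add, mul_sum, mul_sum]
  simp only [ptildeWeight, mul_zero, Nat.cast_zero]
  congr 1
  · ring
  · exact sum_congr rfl fun l _ ↦ by ring

lemma ptildeWeight_sq {m l : ℕ} (h : l ≤ m) :
    ptildeWeight m l ^ 2 =
      π ^ 2 / 16 * ((wallisRatio (m - l) ^ 2 * (2 * (m - l : ℕ) + 1)) *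
        (wallisRatio (m + l) ^ 2 * (2 * (m + l : ℕ) + 1))) *
        ((4 * m + 1) ^ 2 / ((2 * m + 1) ^ 2 - 4 * l ^ 2)) := by
  have hlm : (l : ℝ) ≤ m := by exact_mod_cast h
  have hden : (2 * (m : ℝ) + 1) ^ 2 - 4 * l ^ 2 =
      (2 * (m - l : ℕ) + 1) * (2 * (m + l : ℕ) + 1) := by
    push_cast [h]
    ring
  have : (0 : ℝ) < (2 * m + 1) ^ 2 - 4 * l ^ 2 := by nlinarith
  rw [ptildeWeight, ptildeSqZ_two_mul h, hden]
  field_simp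
  ring

lemma tendsto_ptildeWeight (l : ℕ) : Tendsto (fun m ↦ ptildeWeight m l) atTop (𝓝 1) := by
  have hq := tendsto_wallisRatio_sq_mul
  have hsq : Tendsto (fun m ↦ ptildeWeight m l ^ 2) atTop
      (𝓝 (π ^ 2 / 16 * (2 / π * (2 / π)) * 4)) := by
    refine ((((hq.comp (tendsto_sub_atTop_nat l)).mul
      (hq.comp (tendsto_add_atTop_nat l))).const_mul _).mul
        (tendsto_sq_div_sq_sub (4 * l ^ 2))).congr' ?_
    filter_upwards [eventually_ge_atTop l] with m hm
    exact (ptildeWeight_sq hm).symm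
  have h1 : π ^ 2 / 16 * (2 / π * (2 / π)) * 4 = 1 := by
    field_simp
    ring
  rw [h1] at hsq
  simpa [Real.sqrt_sq (ptildeWeight_nonneg _ _)] using hsq.sqrt

lemma ptildeWeight_sq_le {m l : ℕ} (hl : 1 ≤ l) (h : l ≤ m) :
    ptildeWeight m l ^ 2 ≤ 20 * l := by
  have hlm : (l : ℝ) ≤ m := by exact_mod_cast h
  have hl1 : (1 : ℝ) ≤ l := by exact_mod_cast hl
  have hden : (0 : ℝ) < (2 * m + 1) ^ 2 - 4 * l ^ 2 := by nlinarith
  have hratio : (4 * (m : ℝ) + 1) ^ 2 / ((2 * m + 1) ^ 2 - 4 * l ^ 2) ≤ 20 * l := by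
    rw [div_le_iff₀ hden]
    nlinarith [mul_nonneg (sub_nonneg.2 hlm) (sub_nonneg.2 hl1)]
  have hq := mul_le_mul (wallisRatio_sq_mul_le (m - l)) (wallisRatio_sq_mul_le (m + l))
    (by positivity) (by positivity)
  rw [ptildeWeight_sq h]
  calc _ ≤ π ^ 2 / 16 * (4 / π * (4 / π)) * (20 * l) := by gcongr
    _ = 20 * l := by field_simp; ring

lemma norm_ptildeWeight_mul_le {m l : ℕ} (hl : l ∈ Icc 1 m) (x : ℝ) :
    ‖ptildeWeight m l * (sin x ^ 2 / l ^ 2)‖ ≤ √20 * (√(l : ℝ) / l ^ 2) := by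
  obtain ⟨hl1, hlm⟩ := mem_Icc.1 hl
  have hl0 : (0 : ℝ) < l := by exact_mod_cast hl1
  calc ‖ptildeWeight m l * (sin x ^ 2 / l ^ 2)‖
        = |ptildeWeight m l| * (sin x ^ 2 / l ^ 2) := by
        rw [norm_mul, Real.norm_eq_abs, Real.norm_of_nonneg (by positivity)]
    _ ≤ √(20 * l) * (1 / l ^ 2) := by
        gcongr
        · exact abs_le_sqrt (ptildeWeight_sq_le hl1 hlm)
        · exact sin_sq_le_one x
    _ = √20 * (√(l : ℝ) / l ^ 2) := by
        rw [sqrt_mul (by norm_num)]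
        ring

theorem muSq_even_limit (ψ : ℝ) (hψ : ψ ∈ Set.Icc 0 Real.pi) :
    Tendsto (fun m : ℕ => (4 * (m : ℝ) + 1) / 4 * muSq (2 * m) ψ) atTop
      (nhds (if ψ ≤ Real.pi / 2 then 4 * Real.pi * ψ
        else 12 * Real.pi * ψ - 4 * Real.pi ^ 2)) := by
  have hseries := hasSum_sin_two_mul_sq_div_sq hψ
  have hsum : Tendsto (fun m ↦ ∑ l ∈ Icc 1 m, ptildeWeight m l * (sin (2 * l * ψ) ^ 2 / l ^ 2))
      atTop (𝓝 (∑' l : ℕ, sin (2 * l * ψ) ^ 2 / l ^ 2)) :=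
    tendsto_sum_Icc_mul_of_dominated (summable_sqrt_div_sq.mul_left √20) (fun l ↦ by positivity)
      (by simp) tendsto_ptildeWeight fun m l hl ↦ norm_ptildeWeight_mul_le hl _
  rw [hseries.tsum_eq] at hsum
  simp_rw [muSq_two_mul]
  convert ((tendsto_ptildeWeight 0).mul_const (8 * ψ ^ 2)).add (hsum.const_mul 4) using 2
  split_ifs <;> ring
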